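/- arXiv:1602.05386 — 2 statements merged into one kernel-verified Lean document; each statement's English description precedes it below -/
import Mathlib

section
/- The following two statements are equivalent: (i) for every integer k ≥ 3 and all integers n ≥ m ≥ 3, R(P^k_n, P^k_m) = R(P^k_n, C^k_m) = R(C^k_n, C^k_m) + 1 = (k−1)n + ⌊(m+1)/2⌋; (ii) for every integer k ≥ 3 and all integers n ≥ m ≥ 3, R(C^k_n, C^k_m) = (k−1)n + ⌊(m−1)/2⌋. -/
open Finset

/-- The `i`-th edge (0-indexed) of a `k`-uniform loose path embedded via `f`. -/
def pathEdge (k : ℕ) {V : Type} [DecidableEq V] (f : ℕ → V) (i : ℕ) : Finset V :=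
  (Finset.range k).image fun j => f (i * (k - 1) + j)

/-- The `i`-th edge (0-indexed) of a `k`-uniform loose cycle of length `n` embedded via `f`. -/
def cycleEdge (k n : ℕ) {V : Type} [DecidableEq V] (f : ℕ → V) (i : ℕ) : Finset V :=
  (Finset.range k).image fun j => f ((i * (k - 1) + j) % (n * (k - 1)))

/-- There is a copy of the loose path `P^k_n` all of whose edges have color `b`. -/
def hasPath (k n : ℕ) {V : Type} [DecidableEq V] (col : Finset V → Bool) (b : Bool) : Prop :=
  ∃ f : ℕ → V, Set.InjOn f (Set.Iio (n * (k - 1) + 1)) ∧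
    ∀ i < n, col (pathEdge k f i) = b

/-- There is a copy of the loose cycle `C^k_n` all of whose edges have color `b`. -/
def hasCycle (k n : ℕ) {V : Type} [DecidableEq V] (col : Finset V → Bool) (b : Bool) : Prop :=
  ∃ f : ℕ → V, Set.InjOn f (Set.Iio (n * (k - 1))) ∧
    ∀ i < n, col (cycleEdge k n f i) = b

/-- Ramsey number `R(P^k_n, P^k_m)` (red = `true`, blue = `false`). -/
noncomputable def ramseyPP (k n m : ℕ) : ℕ :=
  sInf {N | ∀ col : Finset (Fin N) → Bool, hasPath k n col true ∨ hasPath k m col false}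

/-- Ramsey number `R(P^k_n, C^k_m)`. -/
noncomputable def ramseyPC (k n m : ℕ) : ℕ :=
  sInf {N | ∀ col : Finset (Fin N) → Bool, hasPath k n col true ∨ hasCycle k m col false}

/-- Ramsey number `R(C^k_n, P^k_m)`. -/
noncomputable def ramseyCP (k n m : ℕ) : ℕ :=
  sInf {N | ∀ col : Finset (Fin N) → Bool, hasCycle k n col true ∨ hasPath k m col false}

/-- Ramsey number `R(C^k_n, C^k_m)`. -/
noncomputable def ramseyCC (k n m : ℕ) : ℕ :=
  sInf {N | ∀ col : Finset (Fin N) → Bool, hasCycle k n col true ∨ hasCycle k m col false}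

/-!
Only (ii) → (i) has content; it uses (ii) for `R(C_n, C_m)` and `R(C_n, C_{m+1})`.

Lower bounds: on `(k-1)n + ⌊(m+1)/2⌋ - 1` vertices, colour a `k`-set red iff it lies among the
first `(k-1)n` vertices. A red `P_n` would need `(k-1)n + 1` of them, while every blue edge meets
the remaining `⌊(m+1)/2⌋ - 1` vertices, each of which lies in at most two edges of a loose path
or cycle; so there is no blue `P_m` and no blue `C_m`.

Upper bounds: on `(k-1)n + ⌊(m+1)/2⌋` vertices, (ii) yields a red `C_n` (the other outcomes give
the blue graph directly, or are symmetric), and `⌊(m+1)/2⌋` vertices lie off it. Replacing every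
other junction of the cycle by such a fresh vertex, with an adjustment at one end, gives a
candidate `P_m` or `C_m` each of whose edges consists of the interior of a cycle edge, exactly one
end of that cycle edge, and fresh vertices. A red candidate edge can take the place of its cycle
edge, which opens the cycle into a red `P_n`; if there is none, the candidate is blue.
-/

theorem mul_add_le_mul {i m : ℕ} (ℓ : ℕ) (h : i < m) : i * ℓ + ℓ ≤ m * ℓ := by
  simpa [add_mul] using Nat.mul_le_mul_right ℓ h

theorem mod_mul_add_mod {r c a d : ℕ} : (a % r * c + d) % (r * c) = (a * c + d) % (r * c) := by
  conv_rhs => rw [← Nat.div_add_mod a r, add_mul, add_assoc, mul_comm r, mul_assoc,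
    add_comm, Nat.add_mul_mod_self_right]

theorem mul_add_div_of_lt {ℓ i j : ℕ} (hj : j < ℓ) : (i * ℓ + j) / ℓ = i := by
  rw [add_comm, Nat.add_mul_div_right _ _ (by omega), Nat.div_eq_of_lt hj, zero_add]

theorem mod_eq_self_or_eq_sub {x R : ℕ} (h : x < 2 * R) :
    x < R ∧ x % R = x ∨ R ≤ x ∧ x % R = x - R := by
  rcases lt_or_ge x R with hx | hx
  · exact .inl ⟨hx, Nat.mod_eq_of_lt hx⟩
  · exact .inr ⟨hx, by rw [Nat.mod_eq_sub_mod hx, Nat.mod_eq_of_lt (by omega)]⟩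

theorem injOn_add_mod {c M k : ℕ} (hk : k ≤ M) :
    Set.InjOn (fun j => (c + j) % M) (Set.Iio k) := by
  intro x hx y hy hxy
  have := Nat.ModEq.add_left_cancel' c hxy
  rwa [Nat.ModEq, Nat.mod_eq_of_lt (lt_of_lt_of_le hx hk),
    Nat.mod_eq_of_lt (lt_of_lt_of_le hy hk)] at this

theorem eq_or_eq_of_mem_window {ℓ i u : ℕ} (hℓ : 0 < ℓ) (h₁ : i * ℓ ≤ u)
    (h₂ : u ≤ i * ℓ + ℓ) : i = u / ℓ ∨ i = u / ℓ - 1 := by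
  have := (Nat.le_div_iff_mul_le hℓ).mpr h₁
  have : u / ℓ ≤ i + 1 := Nat.div_le_of_le_mul (by rw [mul_add_one, mul_comm]; exact h₂)
  omega

theorem exists_mem_window {n ℓ p : ℕ} (hn : 1 ≤ n) (hp : p ≤ n * ℓ) :
    ∃ i < n, ∃ j ≤ ℓ, p = i * ℓ + j := by
  rcases hp.lt_or_eq with hp | rfl
  · have hℓ : 0 < ℓ := Nat.pos_of_ne_zero (by rintro rfl; simp at hp)
    exact ⟨p / ℓ, Nat.div_lt_of_lt_mul (by rwa [mul_comm]), p % ℓ, (Nat.mod_lt _ hℓ).le,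
      (Nat.div_add_mod' p ℓ).symm⟩
  · exact ⟨n - 1, by omega, ℓ, le_rfl, by rw [← add_one_mul, Nat.sub_add_cancel hn]⟩

theorem exists_injOn_Iio_of_le_card {α : Type*} [Nonempty α] (s : Finset α) {t : ℕ}
    (ht : t ≤ s.card) :
    ∃ w : ℕ → α, Set.InjOn w (Set.Iio t) ∧ Set.MapsTo w (Set.Iio t) s := by
  classical
  refine ⟨fun j => if hj : j < s.card then (s.equivFin.symm ⟨j, hj⟩ : α)
    else Classical.arbitrary α, fun a ha c hc hac => ?_, fun a ha => ?_⟩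
  · simp only [Set.mem_Iio] at ha hc
    simp only [dif_pos (ha.trans_le ht), dif_pos (hc.trans_le ht)] at hac
    simpa using s.equivFin.symm.injective (Subtype.ext hac)
  · simp only [Set.mem_Iio] at ha
    simp [dif_pos (ha.trans_le ht)]

theorem le_two_mul_card_of_fibers {α : Type*} [DecidableEq α] {m : ℕ} {s : Finset α}
    (h : ℕ → α) (hs : ∀ i < m, h i ∈ s)
    (hfib : ∀ i < m, ∃ a c, ∀ i' < m, h i' = h i → i' = a ∨ i' = c) :
    m ≤ 2 * s.card := by
  have := card_le_mul_card_image (f := h) (range m) 2 fun v hv => by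
    obtain ⟨i, hi, rfl⟩ := mem_image.mp hv
    obtain ⟨a, c, hac⟩ := hfib i (mem_range.mp hi)
    refine (card_le_card fun i' hi' => ?_).trans (card_le_two (a := a) (b := c))
    rw [mem_filter, mem_range] at hi'
    simpa using hac i' hi'.1 hi'.2
  rw [card_range] at this
  refine this.trans (Nat.mul_le_mul_left 2 (card_le_card fun v hv => ?_))
  obtain ⟨i, hi, rfl⟩ := mem_image.mp hv
  exact hs i (mem_range.mp hi)

theorem injOn_append {α : Type*} {f τ : ℕ → α} {L t : ℕ}
    (hf : Set.InjOn f (Set.Iio (L + 1))) (hτ : Set.InjOn τ (Set.Iio t))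
    (hfτ : ∀ p ≤ L, ∀ u < t, f p ≠ τ u) :
    Set.InjOn (fun p => if p ≤ L then f p else τ (p - L - 1)) (Set.Iio (L + t + 1)) := by
  intro p hp q hq hpq
  simp only [Set.mem_Iio] at hp hq
  dsimp only at hpq
  split_ifs at hpq with h₁ h₂ h₂
  · exact hf (show p < L + 1 by omega) (show q < L + 1 by omega) hpq
  · exact absurd hpq (hfτ p h₁ _ (by omega))
  · exact absurd hpq.symm (hfτ q h₂ _ (by omega))
  · have := hτ (show p - L - 1 < t by omega) (show q - L - 1 < t by omega) hpq
    omega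

def IsPathCopy {V : Type} [DecidableEq V] (k n : ℕ) (col : Finset V → Bool) (b : Bool)
    (f : ℕ → V) : Prop :=
  Set.InjOn f (Set.Iio (n * (k - 1) + 1)) ∧ ∀ i < n, col (pathEdge k f i) = b

def IsCycleCopy {V : Type} [DecidableEq V] (k n : ℕ) (col : Finset V → Bool) (b : Bool)
    (f : ℕ → V) : Prop :=
  Set.InjOn f (Set.Iio (n * (k - 1))) ∧ ∀ i < n, col (cycleEdge k n f i) = b

section Copies

variable {V : Type} [DecidableEq V] {k : ℕ} {col : Finset V → Bool} {b : Bool} {f : ℕ → V}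

theorem hasCycle_of_hasCycle_image {W : Type} [DecidableEq W] {n : ℕ} {e : V → W}
    (he : Function.Injective e) {col : Finset W → Bool}
    (h : hasCycle k n (fun s => col (s.image e)) b) : hasCycle k n col b := by
  obtain ⟨f, hf, hcol⟩ := h
  refine ⟨e ∘ f, he.comp_injOn hf, fun i hi => ?_⟩
  rw [← hcol i hi]
  simp only [cycleEdge, image_image]
  rfl

theorem IsPathCopy.reverse {n : ℕ} (hk : 1 ≤ k) (h : IsPathCopy k n col b f) :
    IsPathCopy k n col b (fun p => f (n * (k - 1) - p)) := by
  refine ⟨fun p hp q hq hpq => ?_, fun i hi => ?_⟩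
  · have := h.1 (show n * (k - 1) - p < _ by omega) (show n * (k - 1) - q < _ by omega) hpq
    simp only [Set.mem_Iio] at hp hq
    omega
  · have hrev : (n - 1 - i) * (k - 1) + (k - 1) + i * (k - 1) = n * (k - 1) := by
      rw [← add_one_mul, ← add_mul]; congr 1; omega
    have : pathEdge k (fun p => f (n * (k - 1) - p)) i = pathEdge k f (n - 1 - i) := by
      conv_rhs => rw [pathEdge, ← range_image_pred_top_sub k, image_image]
      refine image_congr fun j hj => ?_
      simp only [coe_range, Set.mem_Iio] at hj
      simp only [Function.comp]
      congr 1
      omega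
    rw [this]
    exact h.2 _ (by omega)

theorem IsCycleCopy.rotate {r : ℕ} (hk : 2 ≤ k) (hr : 0 < r) (h : IsCycleCopy k r col b f)
    (t : ℕ) : IsPathCopy k (r - 1) col b (fun q => f ((t * (k - 1) + q) % (r * (k - 1)))) := by
  have hr' : (r - 1) * (k - 1) + (k - 1) = r * (k - 1) := by
    rw [← add_one_mul]; congr 1; omega
  have hpos : 0 < r * (k - 1) := Nat.mul_pos hr (by omega)
  refine ⟨fun p hp q hq hpq => ?_, fun i hi => ?_⟩
  · simp only [Set.mem_Iio] at hp hq
    have := Nat.ModEq.add_left_cancel' _ (h.1 (Nat.mod_lt _ hpos) (Nat.mod_lt _ hpos) hpq)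
    rwa [Nat.ModEq, Nat.mod_eq_of_lt (by omega), Nat.mod_eq_of_lt (by omega)] at this
  · have : pathEdge k (fun q => f ((t * (k - 1) + q) % (r * (k - 1)))) i
        = cycleEdge k r f ((t + i) % r) := by
      refine image_congr fun j _ => ?_
      simp only [mod_mul_add_mod, add_mul, add_assoc]
    rw [this]
    exact h.2 _ (Nat.mod_lt _ hr)

theorem IsPathCopy.snoc {n : ℕ} {e : Finset V} (hk : 1 ≤ k) (h : IsPathCopy k n col b f)
    (he : e.card = k) (hce : col e = b) (hlast : f (n * (k - 1)) ∈ e)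
    (hdisj : ∀ p < n * (k - 1), f p ∉ e) : hasPath k (n + 1) col b := by
  set L := n * (k - 1) with hL
  have : Nonempty V := ⟨f 0⟩
  obtain ⟨τ, hτ, hτe⟩ := exists_injOn_Iio_of_le_card (e.erase (f L))
    (t := k - 1) (by rw [card_erase_of_mem hlast, he])
  have hfτ : ∀ p ≤ L, ∀ u < k - 1, f p ≠ τ u := by
    intro p hp u hu hpu
    have hu := mem_erase.mp (hτe (show u ∈ Set.Iio (k - 1) from hu))
    rcases hp.lt_or_eq with hp | rfl
    · exact hdisj p hp (hpu ▸ hu.2)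
    · exact hu.1 hpu.symm
  set g : ℕ → V := fun p => if p ≤ L then f p else τ (p - L - 1) with hg
  have hginj : Set.InjOn g (Set.Iio ((n + 1) * (k - 1) + 1)) := by
    simpa only [add_one_mul] using injOn_append h.1 hτ hfτ
  refine ⟨g, hginj, fun i hi => ?_⟩
  rcases (Nat.lt_succ_iff.mp hi).lt_or_eq with hi | rfl
  · have : pathEdge k g i = pathEdge k f i := by
      refine image_congr fun j hj => ?_
      simp only [coe_range, Set.mem_Iio] at hj
      have := mul_add_le_mul (k - 1) hi
      simp only [hg, if_pos (show i * (k - 1) + j ≤ L by omega)]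
    rw [this]
    exact h.2 i hi
  · suffices pathEdge k g i = e from this ▸ hce
    refine eq_of_subset_of_card_le (fun v hv => ?_) ?_
    · obtain ⟨j, hj, rfl⟩ := mem_image.mp hv
      simp only [mem_range] at hj
      simp only [hg, ← hL]
      split_ifs with hj'
      · rwa [show L + j = L by omega]
      · exact mem_of_mem_erase (hτe (show L + j - L - 1 < k - 1 by omega))
    · rw [he, pathEdge, card_image_of_injOn, card_range]
      refine hginj.comp (add_right_injective _).injOn fun j hj => ?_
      simp only [coe_range, Set.mem_Iio, add_one_mul] at hj ⊢
      omega

theorem IsCycleCopy.hasPath_of_detour_left {r i : ℕ} {e : Finset V} (hk : 2 ≤ k)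
    (h : IsCycleCopy k r col b f) (hi : i < r) (he : e.card = k) (hce : col e = b)
    (hx : f (i * (k - 1)) ∈ e)
    (hmeet : ∀ p < r * (k - 1), f p ∈ e →
      p ∈ Set.Ico (i * (k - 1)) (i * (k - 1) + (k - 1))) :
    hasPath k r col b := by
  have hP := h.rotate hk (by omega) (i + 1)
  obtain ⟨r, rfl⟩ : ∃ r', r = r' + 1 := ⟨r - 1, by omega⟩
  rw [Nat.add_sub_cancel] at hP
  have := mul_add_le_mul (k - 1) hi
  simp only [add_one_mul] at this hP hmeet
  refine hP.snoc (by omega) he hce ?_ fun q hq hmem => ?_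
  · rwa [show i * (k - 1) + (k - 1) + r * (k - 1)
      = i * (k - 1) + (r * (k - 1) + (k - 1)) by ring, Nat.add_mod_right,
      Nat.mod_eq_of_lt (by omega)]
  · have hpos := hmeet _ (Nat.mod_lt _ (by omega)) hmem
    simp only [Set.mem_Ico] at hpos
    rcases mod_eq_self_or_eq_sub (x := i * (k - 1) + (k - 1) + q) (R := r * (k - 1) + (k - 1))
      (by omega)
      with ⟨_, h'⟩ | ⟨_, h'⟩ <;> omega

theorem IsCycleCopy.hasPath_of_detour_right {r i : ℕ} {e : Finset V} (hk : 2 ≤ k)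
    (h : IsCycleCopy k r col b f) (hi : i + 1 < r) (he : e.card = k) (hce : col e = b)
    (hx : f ((i + 1) * (k - 1)) ∈ e)
    (hmeet : ∀ p < r * (k - 1), f p ∈ e →
      p ∈ Set.Ioc (i * (k - 1)) (i * (k - 1) + (k - 1))) :
    hasPath k r col b := by
  have hP := (h.rotate hk (by omega) (i + 1)).reverse (by omega)
  obtain ⟨r, rfl⟩ : ∃ r', r = r' + 1 := ⟨r - 1, by omega⟩
  rw [Nat.add_sub_cancel] at hP
  have := mul_add_le_mul (k - 1) hi
  simp only [add_one_mul] at this hP hmeet hx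
  refine hP.snoc (by omega) he hce ?_ fun q hq hmem => ?_
  · rwa [Nat.sub_self, add_zero, Nat.mod_eq_of_lt (by omega)]
  · have hpos := hmeet _ (Nat.mod_lt _ (by omega)) hmem
    simp only [Set.mem_Ioc] at hpos
    rcases mod_eq_self_or_eq_sub (x := i * (k - 1) + (k - 1) + (r * (k - 1) - q))
      (R := r * (k - 1) + (k - 1)) (by omega) with ⟨_, h'⟩ | ⟨_, h'⟩ <;> omega

end Copies

section Detours

variable {V : Type} [DecidableEq V] {k r : ℕ} {col : Finset V → Bool} {b : Bool} {f : ℕ → V}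

/-- `e` can take the place of the `i`-th edge of the cycle `f`: it contains one end of that edge
and meets the cycle only inside the edge minus its other end. -/
def IsDetour (k r : ℕ) (f : ℕ → V) (e : Finset V) : Prop :=
  e.card = k ∧ ∃ i,
    (i < r ∧ f (i * (k - 1)) ∈ e ∧
      ∀ p < r * (k - 1), f p ∈ e → p ∈ Set.Ico (i * (k - 1)) (i * (k - 1) + (k - 1))) ∨
    (i + 1 < r ∧ f ((i + 1) * (k - 1)) ∈ e ∧
      ∀ p < r * (k - 1), f p ∈ e → p ∈ Set.Ioc (i * (k - 1)) (i * (k - 1) + (k - 1)))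

theorem IsCycleCopy.hasPath_of_isDetour (hk : 2 ≤ k) (h : IsCycleCopy k r col b f)
    {e : Finset V} (hd : IsDetour k r f e) (hce : col e = b) : hasPath k r col b := by
  obtain ⟨hcard, i, ⟨hi, hx, hmeet⟩ | ⟨hi, hx, hmeet⟩⟩ := hd
  exacts [h.hasPath_of_detour_left hk hi hcard hce hx hmeet,
    h.hasPath_of_detour_right hk hi hcard hce hx hmeet]

theorem IsCycleCopy.hasPath_or_hasPath_of_isDetour {m : ℕ} {g : ℕ → V} (hk : 2 ≤ k)
    (h : IsCycleCopy k r col b f) (hg : Set.InjOn g (Set.Iio (m * (k - 1) + 1)))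
    (hd : ∀ i < m, IsDetour k r f (pathEdge k g i)) :
    hasPath k r col b ∨ hasPath k m col (!b) :=
  or_iff_not_imp_left.mpr fun hP => ⟨g, hg, fun i hi =>
    Bool.eq_not_iff.mpr fun hb => hP (h.hasPath_of_isDetour hk (hd i hi) hb)⟩

theorem IsCycleCopy.hasPath_or_hasCycle_of_isDetour {m : ℕ} {g : ℕ → V} (hk : 2 ≤ k)
    (h : IsCycleCopy k r col b f) (hg : Set.InjOn g (Set.Iio (m * (k - 1))))
    (hd : ∀ i < m, IsDetour k r f (cycleEdge k m g i)) :
    hasPath k r col b ∨ hasCycle k m col (!b) :=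
  or_iff_not_imp_left.mpr fun hP => ⟨g, hg, fun i hi =>
    Bool.eq_not_iff.mpr fun hb => hP (h.hasPath_of_isDetour hk (hd i hi) hb)⟩

end Detours

def IsJunction (ℓ : ℕ) (φ : ℕ → Prop) (p : ℕ) : Prop :=
  p % ℓ = 0 ∧ φ (p / ℓ)

instance {ℓ : ℕ} {φ : ℕ → Prop} [DecidablePred φ] : DecidablePred (IsJunction ℓ φ) :=
  fun _ => inferInstanceAs (Decidable (_ ∧ _))

section Junction

variable {ℓ i j p q : ℕ} {φ ψ : ℕ → Prop}

theorem isJunction_mul_add_iff (hj : j < ℓ) :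
    IsJunction ℓ φ (i * ℓ + j) ↔ j = 0 ∧ φ i := by
  rw [IsJunction, Nat.mul_add_mod_of_lt hj, mul_add_div_of_lt hj]

theorem isJunction_mul_iff (hℓ : 0 < ℓ) : IsJunction ℓ φ (i * ℓ) ↔ φ i := by
  simpa using isJunction_mul_add_iff (i := i) (φ := φ) hℓ

theorem isJunction_mul_add_self_iff (hℓ : 0 < ℓ) :
    IsJunction ℓ φ (i * ℓ + ℓ) ↔ φ (i + 1) := by
  rw [← add_one_mul, isJunction_mul_iff hℓ]

theorem isJunction_mul_add_self_mod {m : ℕ} (hℓ : 0 < ℓ) (hi : i < m) (h₀ : φ 0)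
    (h : i + 1 < m → φ (i + 1)) : IsJunction ℓ φ ((i * ℓ + ℓ) % (m * ℓ)) := by
  rcases (show i + 1 < m ∨ i + 1 = m by omega) with him | him
  · have := mul_add_le_mul ℓ him
    rw [add_one_mul] at this
    rw [Nat.mod_eq_of_lt (by omega), isJunction_mul_add_self_iff hℓ]
    exact h him
  · rw [← add_one_mul, him, Nat.mod_self]
    exact ⟨Nat.zero_mod _, by simpa⟩

theorem IsJunction.eq_of_div_eq (hp : IsJunction ℓ φ p) (hq : IsJunction ℓ ψ q)
    (h : p / ℓ = q / ℓ) : p = q :=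
  Nat.ext_div_mod h (hp.1.trans hq.1.symm)

end Junction

def splice {V : Type} (D : ℕ → Prop) [DecidablePred D] (a π : ℕ → ℕ) (f w : ℕ → V)
    (p : ℕ) : V :=
  if D p then w (a p) else f (π p)

structure IsSplicing (D : ℕ → Prop) (a π : ℕ → ℕ) (M N t : ℕ) : Prop where
  index_lt : ∀ p < M, D p → a p < t
  index_inj : ∀ p < M, ∀ q < M, D p → D q → a p = a q → p = q
  pos_lt : ∀ p < M, ¬ D p → π p < N
  pos_inj : ∀ p < M, ∀ q < M, ¬ D p → ¬ D q → π p = π q → p = q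

section Splice

variable {V : Type} {D : ℕ → Prop} [DecidablePred D] {a π : ℕ → ℕ} {f w : ℕ → V}
  {M N t : ℕ}

theorem splice_of_not {p : ℕ} (hD : ¬ D p) : splice D a π f w p = f (π p) := if_neg hD

theorem IsSplicing.injOn (hs : IsSplicing D a π M N t) (hf : Set.InjOn f (Set.Iio N))
    (hw : Set.InjOn w (Set.Iio t)) (hwf : ∀ x < t, ∀ q < N, w x ≠ f q) :
    Set.InjOn (splice D a π f w) (Set.Iio M) := by
  intro p hp q hq hpq
  have ha := hs.index_lt
  have hπ := hs.pos_lt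
  unfold splice at hpq
  split_ifs at hpq with hDp hDq hDq
  · exact hs.index_inj p hp q hq hDp hDq (hw (ha p hp hDp) (ha q hq hDq) hpq)
  · exact absurd hpq (hwf _ (ha p hp hDp) _ (hπ q hq hDq))
  · exact absurd hpq.symm (hwf _ (ha q hq hDq) _ (hπ p hp hDp))
  · exact hs.pos_inj p hp q hq hDp hDq (hf (hπ p hp hDp) (hπ q hq hDq) hpq)

theorem IsSplicing.meet [DecidableEq V] {k : ℕ} {ρ : ℕ → ℕ} (W : Set ℕ)
    (hs : IsSplicing D a π M N t) (hf : Set.InjOn f (Set.Iio N))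
    (hwf : ∀ x < t, ∀ q < N, w x ≠ f q) (hρ : ∀ j < k, ρ j < M)
    (hW : ∀ j < k, ¬ D (ρ j) → π (ρ j) ∈ W) :
    ∀ p < N, f p ∈ (range k).image (fun j => splice D a π f w (ρ j)) → p ∈ W := by
  intro p hp hmem
  obtain ⟨j, hj, hjp⟩ := mem_image.mp hmem
  rw [mem_range] at hj
  unfold splice at hjp
  split_ifs at hjp with hD
  · exact absurd hjp (hwf _ (hs.index_lt _ (hρ j hj) hD) p hp)
  · rw [← hf (hs.pos_lt _ (hρ j hj) hD) hp hjp]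
    exact hW j hj hD

theorem IsSplicing.isDetour [DecidableEq V] {k r i : ℕ} {ρ : ℕ → ℕ}
    (hs : IsSplicing D a π M (r * (k - 1)) t) (hf : Set.InjOn f (Set.Iio (r * (k - 1))))
    (hw : Set.InjOn w (Set.Iio t)) (hwf : ∀ x < t, ∀ q < r * (k - 1), w x ≠ f q)
    (hρ : Set.InjOn ρ (Set.Iio k)) (hρM : ∀ j < k, ρ j < M)
    (h : (i < r ∧ (∃ j < k, ¬ D (ρ j) ∧ π (ρ j) = i * (k - 1)) ∧
          ∀ j < k, ¬ D (ρ j) →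
            π (ρ j) ∈ Set.Ico (i * (k - 1)) (i * (k - 1) + (k - 1))) ∨
        (i + 1 < r ∧ (∃ j < k, ¬ D (ρ j) ∧ π (ρ j) = (i + 1) * (k - 1)) ∧
          ∀ j < k, ¬ D (ρ j) →
            π (ρ j) ∈ Set.Ioc (i * (k - 1)) (i * (k - 1) + (k - 1)))) :
    IsDetour k r f ((range k).image fun j => splice D a π f w (ρ j)) := by
  have hcard : ((range k).image fun j => splice D a π f w (ρ j)).card = k := by
    rw [card_image_of_injOn, card_range]
    exact (hs.injOn hf hw hwf).comp (by simpa using hρ) fun j hj => hρM j (by simpa using hj)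
  have hmem {q : ℕ} : (∃ j < k, ¬ D (ρ j) ∧ π (ρ j) = q) →
      f q ∈ (range k).image fun j => splice D a π f w (ρ j) := fun ⟨j, hj, hD, hπ⟩ =>
    mem_image.mpr ⟨j, mem_range.mpr hj, by rw [splice_of_not hD, hπ]⟩
  refine ⟨hcard, i, h.imp (fun ⟨hi, hx, hW⟩ => ⟨hi, hmem hx, ?_⟩) fun ⟨hi, hx, hW⟩ =>
    ⟨hi, hmem hx, ?_⟩⟩ <;>
  exact hs.meet _ hf hwf hρM hW

end Splice

section Switching

variable {V : Type} [DecidableEq V] {k r m : ℕ} {col : Finset V → Bool} {b : Bool}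
  {f w : ℕ → V}

-- For even `m` the last junction reuses `f ((m - 1) * (k - 1))`, freed by a fresh vertex.
def splicedPath (k m : ℕ) (f w : ℕ → V) : ℕ → V :=
  splice (IsJunction (k - 1) (· % 2 = 1)) (fun p => p / (k - 1) / 2)
    (fun p => if p = m * (k - 1) then (m - 1) * (k - 1) else p) f w

theorem isSplicing_splicedPath (hk : 2 ≤ k) (hm : 1 ≤ m) (hmr : m ≤ r) :
    IsSplicing (IsJunction (k - 1) (· % 2 = 1)) (fun p => p / (k - 1) / 2)
      (fun p => if p = m * (k - 1) then (m - 1) * (k - 1) else p)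
      (m * (k - 1) + 1) (r * (k - 1)) ((m + 1) / 2) := by
  have hℓ : 0 < k - 1 := by omega
  have := Nat.mul_le_mul_right (k - 1) hmr
  have := mul_add_le_mul (k - 1) (show m - 1 < m by omega)
  have hDm : ¬ IsJunction (k - 1) (· % 2 = 1) (m * (k - 1)) → m % 2 = 0 := fun hD => by
    rw [isJunction_mul_iff hℓ] at hD; omega
  have hDm' : ¬ IsJunction (k - 1) (· % 2 = 1) ((m - 1) * (k - 1)) → (m - 1) % 2 = 0 :=
    fun hD => by rw [isJunction_mul_iff hℓ] at hD; omega
  refine ⟨fun p hp hD => ?_, fun p _ q _ hDp hDq hpq => ?_, fun p _ _ => ?_,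
    fun p hp q hq hDp hDq hpq => ?_⟩
  · have : p / (k - 1) ≤ m := Nat.div_le_of_le_mul (by rw [mul_comm]; omega)
    have : p / (k - 1) % 2 = 1 := hD.2
    omega
  · have : p / (k - 1) % 2 = 1 := hDp.2
    have : q / (k - 1) % 2 = 1 := hDq.2
    exact hDp.eq_of_div_eq hDq (by omega)
  · split_ifs <;> omega
  · split_ifs at hpq with h1 h2 h2
    · omega
    · subst h1 hpq; have := hDm hDp; have := hDm' hDq; omega
    · subst h2 hpq; have := hDm hDq; have := hDm' hDp; omega
    · exact hpq

theorem isDetour_splicedPath (hk : 2 ≤ k) (hm : 1 ≤ m) (hmr : m ≤ r)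
    (hf : Set.InjOn f (Set.Iio (r * (k - 1)))) (hw : Set.InjOn w (Set.Iio ((m + 1) / 2)))
    (hwf : ∀ x < (m + 1) / 2, ∀ q < r * (k - 1), w x ≠ f q) {i : ℕ} (hi : i < m) :
    IsDetour k r f (pathEdge k (splicedPath k m f w) i) := by
  have hℓ : 0 < k - 1 := by omega
  have := mul_add_le_mul (k - 1) hi
  have hD : ∀ j < k - 1,
      IsJunction (k - 1) (· % 2 = 1) (i * (k - 1) + j) ↔ j = 0 ∧ i % 2 = 1 :=
    fun j hj => isJunction_mul_add_iff hj
  have hDend : IsJunction (k - 1) (· % 2 = 1) (i * (k - 1) + (k - 1)) ↔ (i + 1) % 2 = 1 :=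
    isJunction_mul_add_self_iff hℓ
  refine (isSplicing_splicedPath hk hm hmr).isDetour (i := i) hf hw hwf
    (add_right_injective _).injOn (fun j hj => by omega) ?_
  rcases Nat.mod_two_eq_zero_or_one i with hev | hodd
  · refine .inl ⟨by omega, ⟨0, by omega, (hD 0 hℓ).not.mpr (by omega), ?_⟩,
      fun j hj hDj => ?_⟩
    · rw [if_neg (by omega), add_zero]
    · rcases (show j < k - 1 ∨ j = k - 1 by omega) with hj | rfl
      · rw [if_neg (by omega), Set.mem_Ico]
        omega
      · exact absurd (hDend.mpr (by omega)) hDj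
  have hj0 : ∀ j, ¬ IsJunction (k - 1) (· % 2 = 1) (i * (k - 1) + j) → j ≠ 0 := by
    rintro j hDj rfl
    exact hDj ((hD 0 hℓ).mpr ⟨rfl, hodd⟩)
  rcases (show i + 1 < m ∨ i + 1 = m by omega) with him | him
  · have := mul_add_le_mul (k - 1) him
    rw [add_one_mul] at this
    refine .inr ⟨by omega, ⟨k - 1, by omega, hDend.not.mpr (by omega), ?_⟩,
      fun j hj hDj => ?_⟩
    · rw [if_neg (by omega), add_one_mul]
    · have := hj0 j hDj
      rw [if_neg (by omega), Set.mem_Ioc]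
      omega
  · have hiℓ : i * (k - 1) + (k - 1) = m * (k - 1) := by rw [← add_one_mul, him]
    have hπ : (m - 1) * (k - 1) = i * (k - 1) := by rw [show m - 1 = i by omega]
    refine .inl ⟨by omega, ⟨k - 1, by omega, hDend.not.mpr (by omega),
      by rw [if_pos hiℓ, hπ]⟩, fun j hj hDj => ?_⟩
    have := hj0 j hDj
    rcases (show j < k - 1 ∨ j = k - 1 by omega) with hj | rfl
    · rw [if_neg (by omega), Set.mem_Ico]
      omega
    · rw [if_pos hiℓ, hπ, Set.mem_Ico]
      omega

theorem IsCycleCopy.hasPath_or_hasPath (hk : 2 ≤ k) (h : IsCycleCopy k r col b f) (hm : 1 ≤ m)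
    (hmr : m ≤ r) (hw : Set.InjOn w (Set.Iio ((m + 1) / 2)))
    (hwf : ∀ x < (m + 1) / 2, ∀ q < r * (k - 1), w x ≠ f q) :
    hasPath k r col b ∨ hasPath k m col (!b) :=
  h.hasPath_or_hasPath_of_isDetour hk ((isSplicing_splicedPath hk hm hmr).injOn h.1 hw hwf)
    fun _ hi => isDetour_splicedPath hk hm hmr h.1 hw hwf hi

def splicedEvenCycle (k : ℕ) (f w : ℕ → V) : ℕ → V :=
  splice (IsJunction (k - 1) (· % 2 = 0)) (fun p => p / (k - 1) / 2) id f w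

theorem isSplicing_splicedEvenCycle (hmr : m ≤ r) :
    IsSplicing (IsJunction (k - 1) (· % 2 = 0)) (fun p => p / (k - 1) / 2) id
      (m * (k - 1)) (r * (k - 1)) ((m + 1) / 2) := by
  have := Nat.mul_le_mul_right (k - 1) hmr
  refine ⟨fun p hp hD => ?_, fun p _ q _ hDp hDq hpq => ?_, fun p hp _ => by simp; omega,
    fun p _ q _ _ _ hpq => hpq⟩
  · have : p / (k - 1) < m := Nat.div_lt_of_lt_mul (by rw [mul_comm]; omega)
    omega
  · have : p / (k - 1) % 2 = 0 := hDp.2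
    have : q / (k - 1) % 2 = 0 := hDq.2
    exact hDp.eq_of_div_eq hDq (by omega)

theorem isDetour_splicedEvenCycle (hk : 2 ≤ k) (hm : 2 ≤ m) (hme : m % 2 = 0) (hmr : m ≤ r)
    (hf : Set.InjOn f (Set.Iio (r * (k - 1)))) (hw : Set.InjOn w (Set.Iio ((m + 1) / 2)))
    (hwf : ∀ x < (m + 1) / 2, ∀ q < r * (k - 1), w x ≠ f q) {i : ℕ} (hi : i < m) :
    IsDetour k r f (cycleEdge k m (splicedEvenCycle k f w) i) := by
  have hℓ : 0 < k - 1 := by omega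
  have := Nat.mul_le_mul_right (k - 1) hm
  have := mul_add_le_mul (k - 1) hi
  have hD : ∀ j < k - 1,
      IsJunction (k - 1) (· % 2 = 0) (i * (k - 1) + j) ↔ j = 0 ∧ i % 2 = 0 :=
    fun j hj => isJunction_mul_add_iff hj
  have hDend : IsJunction (k - 1) (· % 2 = 0) (i * (k - 1) + (k - 1)) ↔ (i + 1) % 2 = 0 :=
    isJunction_mul_add_self_iff hℓ
  refine (isSplicing_splicedEvenCycle hmr).isDetour (i := i) hf hw hwf
    (injOn_add_mod (by omega)) (fun j hj => Nat.mod_lt _ (by omega)) ?_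
  rcases Nat.mod_two_eq_zero_or_one i with hev | hodd
  · have := mul_add_le_mul (k - 1) (show i + 1 < m by omega)
    rw [add_one_mul] at this
    have hj (j : ℕ) (hj : j < k) : (i * (k - 1) + j) % (m * (k - 1)) = i * (k - 1) + j :=
      Nat.mod_eq_of_lt (by omega)
    refine .inr ⟨by omega, ⟨k - 1, by omega, ?_, ?_⟩, fun j hj' hDj => ?_⟩
    · rw [hj _ (by omega)]
      exact hDend.not.mpr (by omega)
    · rw [hj _ (by omega), id, add_one_mul]
    · rw [hj _ hj'] at hDj ⊢
      have : j ≠ 0 := by rintro rfl; exact hDj ((hD 0 hℓ).mpr ⟨rfl, hev⟩)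
      rw [id, Set.mem_Ioc]
      omega
  · refine .inl ⟨by omega, ⟨0, by omega, ?_, ?_⟩, fun j hj hDj => ?_⟩
    · rw [Nat.mod_eq_of_lt (by omega)]
      exact (hD 0 hℓ).not.mpr (by omega)
    · rw [Nat.mod_eq_of_lt (by omega), id, add_zero]
    · rcases (show j < k - 1 ∨ j = k - 1 by omega) with hj | rfl
      · rw [Nat.mod_eq_of_lt (by omega), id, Set.mem_Ico]
        omega
      · exact absurd (isJunction_mul_add_self_mod hℓ hi (by simp) fun _ => by omega) hDj

-- For odd `m` the junctions `0` and `1` are both fresh, so edge `0` takes the end `f (k - 1)`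
-- in place of its interior vertex `f (k - 2)`.
def splicedOddCycle (k m : ℕ) (f w : ℕ → V) : ℕ → V :=
  splice (IsJunction (k - 1) (fun i => i = 0 ∨ i % 2 = 1))
    (fun p => if p / (k - 1) = 0 then m / 2 else p / (k - 1) / 2)
    (fun p => if p = k - 2 then k - 1 else p) f w

theorem isSplicing_splicedOddCycle (hk : 2 ≤ k) (hm : 2 ≤ m) (hmo : m % 2 = 1) (hmr : m ≤ r) :
    IsSplicing (IsJunction (k - 1) (fun i => i = 0 ∨ i % 2 = 1))
      (fun p => if p / (k - 1) = 0 then m / 2 else p / (k - 1) / 2)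
      (fun p => if p = k - 2 then k - 1 else p) (m * (k - 1)) (r * (k - 1)) ((m + 1) / 2) := by
  have hℓ : 0 < k - 1 := by omega
  have := Nat.mul_le_mul_right (k - 1) hmr
  have := Nat.mul_le_mul_right (k - 1) hm
  have hdiv : ∀ p < m * (k - 1), p / (k - 1) < m := fun p hp =>
    Nat.div_lt_of_lt_mul (by rw [mul_comm]; omega)
  refine ⟨fun p hp hD => ?_, fun p hp q hq hDp hDq hpq => ?_, fun p hp _ => ?_,
    fun p _ q _ hDp hDq hpq => ?_⟩
  · have := hdiv p hp
    split_ifs <;> omega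
  · have hp' := hdiv p hp
    have hq' := hdiv q hq
    have : p / (k - 1) = 0 ∨ p / (k - 1) % 2 = 1 := hDp.2
    have : q / (k - 1) = 0 ∨ q / (k - 1) % 2 = 1 := hDq.2
    exact hDp.eq_of_div_eq hDq (by split_ifs at hpq <;> omega)
  · split_ifs <;> omega
  · have hD1 : IsJunction (k - 1) (fun i => i = 0 ∨ i % 2 = 1) (k - 1) := by
      simpa using
        (isJunction_mul_iff (i := 1) (φ := fun i => i = 0 ∨ i % 2 = 1) hℓ).mpr (by simp)
    split_ifs at hpq with h1 h2 h2
    · omega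
    · exact absurd (hpq ▸ hD1) hDq
    · exact absurd (hpq ▸ hD1) hDp
    · exact hpq

theorem isDetour_splicedOddCycle (hk : 3 ≤ k) (hm : 2 ≤ m) (hmo : m % 2 = 1) (hmr : m ≤ r)
    (hf : Set.InjOn f (Set.Iio (r * (k - 1)))) (hw : Set.InjOn w (Set.Iio ((m + 1) / 2)))
    (hwf : ∀ x < (m + 1) / 2, ∀ q < r * (k - 1), w x ≠ f q) {i : ℕ} (hi : i < m) :
    IsDetour k r f (cycleEdge k m (splicedOddCycle k m f w) i) := by
  have hℓ : 0 < k - 1 := by omega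
  have := Nat.mul_le_mul_right (k - 1) hm
  have := mul_add_le_mul (k - 1) hi
  have hD : ∀ j < k - 1, IsJunction (k - 1) (fun i => i = 0 ∨ i % 2 = 1) (i * (k - 1) + j) ↔
      j = 0 ∧ (i = 0 ∨ i % 2 = 1) :=
    fun j hj => isJunction_mul_add_iff hj
  have hDend : IsJunction (k - 1) (fun i => i = 0 ∨ i % 2 = 1) (i * (k - 1) + (k - 1)) ↔
      (i + 1 = 0 ∨ (i + 1) % 2 = 1) :=
    isJunction_mul_add_self_iff hℓ
  refine (isSplicing_splicedOddCycle (by omega) hm hmo hmr).isDetour (i := i) hf hw hwf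
    (injOn_add_mod (by omega)) (fun j hj => Nat.mod_lt _ (by omega)) ?_
  rcases Nat.eq_zero_or_pos i with rfl | hi0
  · simp only [zero_mul, zero_add, true_or, and_true, or_true, iff_true] at hD hDend ⊢
    have hj (j : ℕ) (hj : j < k) : j % (m * (k - 1)) = j := Nat.mod_eq_of_lt (by omega)
    refine .inr ⟨by omega, ⟨k - 2, by omega, ?_, ?_⟩, fun j hj' hDj => ?_⟩
    · rw [hj _ (by omega)]
      exact (hD _ (by omega)).not.mpr (by omega)
    · rw [hj _ (by omega), if_pos rfl, one_mul]
    · rw [hj _ hj'] at hDj ⊢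
      have : j ≠ 0 := by rintro rfl; exact hDj ((hD 0 hℓ).mpr rfl)
      have : j ≠ k - 1 := by rintro rfl; exact hDj hDend
      rw [Set.mem_Ioc]
      split_ifs <;> omega
  have : 1 * (k - 1) ≤ i * (k - 1) := Nat.mul_le_mul_right _ hi0
  rcases Nat.mod_two_eq_zero_or_one i with hev | hodd
  · refine .inl ⟨by omega, ⟨0, by omega, ?_, ?_⟩, fun j hj hDj => ?_⟩
    · rw [Nat.mod_eq_of_lt (by omega)]
      exact (hD 0 hℓ).not.mpr (by omega)
    · rw [Nat.mod_eq_of_lt (by omega), if_neg (by omega), add_zero]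
    · rcases (show j < k - 1 ∨ j = k - 1 by omega) with hj | rfl
      · rw [Nat.mod_eq_of_lt (by omega), if_neg (by omega), Set.mem_Ico]
        omega
      · exact absurd (isJunction_mul_add_self_mod hℓ hi (by simp) fun _ => by omega) hDj
  · have := mul_add_le_mul (k - 1) (show i + 1 < m by omega)
    rw [add_one_mul] at this
    have hj (j : ℕ) (hj : j < k) : (i * (k - 1) + j) % (m * (k - 1)) = i * (k - 1) + j :=
      Nat.mod_eq_of_lt (by omega)
    refine .inr ⟨by omega, ⟨k - 1, by omega, ?_, ?_⟩, fun j hj' hDj => ?_⟩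
    · rw [hj _ (by omega)]
      exact hDend.not.mpr (by omega)
    · rw [hj _ (by omega), if_neg (by omega), add_one_mul]
    · rw [hj _ hj'] at hDj ⊢
      have : j ≠ 0 := by rintro rfl; exact hDj ((hD 0 hℓ).mpr ⟨rfl, .inr hodd⟩)
      rw [if_neg (by omega), Set.mem_Ioc]
      omega

theorem IsCycleCopy.hasPath_or_hasCycle (hk : 3 ≤ k) (h : IsCycleCopy k r col b f) (hm : 2 ≤ m)
    (hmr : m ≤ r) (hw : Set.InjOn w (Set.Iio ((m + 1) / 2)))
    (hwf : ∀ x < (m + 1) / 2, ∀ q < r * (k - 1), w x ≠ f q) :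
    hasPath k r col b ∨ hasCycle k m col (!b) := by
  rcases Nat.mod_two_eq_zero_or_one m with hme | hmo
  · exact h.hasPath_or_hasCycle_of_isDetour (by omega)
      ((isSplicing_splicedEvenCycle hmr).injOn h.1 hw hwf)
      fun _ hi => isDetour_splicedEvenCycle (by omega) hm hme hmr h.1 hw hwf hi
  · exact h.hasPath_or_hasCycle_of_isDetour (by omega)
      ((isSplicing_splicedOddCycle (by omega) hm hmo hmr).injOn h.1 hw hwf)
      fun _ hi => isDetour_splicedOddCycle hk hm hmo hmr h.1 hw hwf hi

end Switching

def coloringBelow (L X : ℕ) : Finset (Fin X) → Bool :=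
  fun s => decide (∀ v ∈ s, (v : ℕ) < L)

section Coloring

variable {k L X : ℕ}

theorem card_filter_le_val_le : (univ.filter fun v : Fin X => L ≤ (v : ℕ)).card ≤ X - L := by
  simpa using card_le_card_of_injOn (fun v : Fin X => (v : ℕ)) (t := Ico L X)
    (fun v hv => by simp at hv ⊢; omega) Fin.val_injective.injOn

theorem not_hasPath_coloringBelow_true {n : ℕ} (hk : 2 ≤ k) (hn : 1 ≤ n) :
    ¬ hasPath k n (coloringBelow (n * (k - 1)) X) true := by
  rintro ⟨f, hf, hcol⟩
  have hlow : ∀ p < n * (k - 1) + 1, (f p : ℕ) < n * (k - 1) := by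
    intro p hp
    obtain ⟨i, hi, j, hj, rfl⟩ := exists_mem_window hn (Nat.lt_succ_iff.mp hp)
    have := hcol i hi
    simp only [coloringBelow, decide_eq_true_eq] at this
    exact this _ (mem_image.mpr ⟨j, mem_range.mpr (by omega), rfl⟩)
  have := card_le_card_of_injOn (fun p => (f p : ℕ)) (s := range (n * (k - 1) + 1))
    (t := range (n * (k - 1))) (fun p hp => by simpa using hlow p (by simpa using hp))
    (fun p hp q hq hpq => hf (by simpa using hp) (by simpa using hq) (Fin.val_injective hpq))
  simp at this

theorem not_hasPath_coloringBelow_false {m : ℕ} (hk : 2 ≤ k) (hm : 1 ≤ m)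
    (hX : X < L + (m + 1) / 2) : ¬ hasPath k m (coloringBelow L X) false := by
  rintro ⟨f, hf, hcol⟩
  have hℓ : 0 < k - 1 := by omega
  have hblue : ∀ i < m, ∃ j < k, L ≤ (f (i * (k - 1) + j) : ℕ) := by
    intro i hi
    have := hcol i hi
    simp only [coloringBelow, pathEdge, decide_eq_false_iff_not, not_forall, not_lt, mem_image,
      mem_range] at this
    obtain ⟨_, ⟨j, hj, rfl⟩, hv⟩ := this
    exact ⟨j, hj, hv⟩
  choose! J hJ hJL using hblue
  have := le_two_mul_card_of_fibers (s := univ.filter fun v : Fin X => L ≤ (v : ℕ))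
    (fun i => f (i * (k - 1) + J i)) (fun i hi => by simpa using hJL i hi) fun i hi => by
      refine ⟨(i * (k - 1) + J i) / (k - 1), (i * (k - 1) + J i) / (k - 1) - 1,
        fun i' hi' heq => eq_or_eq_of_mem_window hℓ ?_ ?_⟩ <;>
      · have := mul_add_le_mul (k - 1) hi
        have := mul_add_le_mul (k - 1) hi'
        have := hJ i hi
        have := hJ i' hi'
        have := hf (show i' * (k - 1) + J i' < _ by omega) (show i * (k - 1) + J i < _ by omega) heq
        omega
  have := card_filter_le_val_le (X := X) (L := L)
  omega

theorem not_hasCycle_coloringBelow_false {m : ℕ} (hk : 2 ≤ k) (hm : 1 ≤ m)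
    (hX : X < L + (m + 1) / 2) : ¬ hasCycle k m (coloringBelow L X) false := by
  rintro ⟨f, hf, hcol⟩
  have hℓ : 0 < k - 1 := by omega
  have hM : 0 < m * (k - 1) := Nat.mul_pos (by omega) hℓ
  have hblue : ∀ i < m, ∃ j < k, L ≤ (f ((i * (k - 1) + j) % (m * (k - 1))) : ℕ) := by
    intro i hi
    have := hcol i hi
    simp only [coloringBelow, cycleEdge, decide_eq_false_iff_not, not_forall, not_lt, mem_image,
      mem_range] at this
    obtain ⟨_, ⟨j, hj, rfl⟩, hv⟩ := this
    exact ⟨j, hj, hv⟩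
  choose! J hJ hJL using hblue
  have := le_two_mul_card_of_fibers (s := univ.filter fun v : Fin X => L ≤ (v : ℕ))
    (fun i => f ((i * (k - 1) + J i) % (m * (k - 1)))) (fun i hi => by simpa using hJL i hi)
    fun i hi => by
      set p := (i * (k - 1) + J i) % (m * (k - 1))
      refine ⟨p / (k - 1), if p = 0 then m - 1 else p / (k - 1) - 1, fun i' hi' heq => ?_⟩
      have hp := hf (Nat.mod_lt _ hM) (Nat.mod_lt _ hM) heq
      have := hJ i' hi'
      have := mul_add_le_mul (k - 1) hi'
      rcases mod_eq_self_or_eq_sub (x := i' * (k - 1) + J i') (R := m * (k - 1)) (by omega)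
        with ⟨_, hx⟩ | ⟨_, hx⟩
      · rw [hx] at hp
        have hw := eq_or_eq_of_mem_window hℓ (u := p) (i := i') (by omega) (by omega)
        by_cases hp0 : p = 0
        · rw [hp0, Nat.zero_div] at hw ⊢
          omega
        · rwa [if_neg hp0]
      · have : m * (k - 1) ≤ (i' + 1) * (k - 1) := by rw [add_one_mul]; omega
        have := Nat.le_of_mul_le_mul_right this hℓ
        right
        rw [if_pos (by omega)]
        omega
  have := card_filter_le_val_le (X := X) (L := L)
  omega

end Coloring

section Ramsey

variable {V : Type} [DecidableEq V] {k n m : ℕ} {col : Finset V → Bool} {b : Bool}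

theorem hasPath_of_hasCycle_succ (hk : 2 ≤ k) (h : hasCycle k (m + 1) col b) :
    hasPath k m col b := by
  obtain ⟨f, hC⟩ : ∃ f, IsCycleCopy k (m + 1) col b f := h
  have := hC.rotate hk (by omega : 0 < m + 1) 0
  rw [Nat.add_sub_cancel] at this
  exact ⟨_, this⟩

theorem exists_fresh [Fintype V] {f : ℕ → V} {L t : ℕ} (hf : Set.InjOn f (Set.Iio L))
    (ht : L + t ≤ Fintype.card V) :
    ∃ w : ℕ → V, Set.InjOn w (Set.Iio t) ∧ ∀ x < t, ∀ q < L, w x ≠ f q := by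
  have : Nonempty V := ⟨f 0⟩
  obtain ⟨w, hw, hws⟩ := exists_injOn_Iio_of_le_card (univ \ (range L).image f) (t := t) (by
    rw [card_sdiff_of_subset (subset_univ _), card_univ, card_image_of_injOn (by simpa using hf),
      card_range]
    omega)
  refine ⟨w, hw, fun x hx q hq hxq => ?_⟩
  have := hws hx
  simp only [coe_sdiff, coe_univ, coe_image, coe_range, Set.mem_sdiff, Set.mem_univ,
    Set.mem_image, Set.mem_Iio, not_exists, not_and, true_and] at this
  exact this q hq hxq.symm

theorem hasPath_or_hasPath_of_hasCycle [Fintype V] (hk : 2 ≤ k) (hm : 1 ≤ m) (hmn : m ≤ n)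
    (hV : n * (k - 1) + (m + 1) / 2 ≤ Fintype.card V) (h : hasCycle k n col b) :
    hasPath k n col b ∨ hasPath k m col (!b) := by
  obtain ⟨f, hC⟩ : ∃ f, IsCycleCopy k n col b f := h
  obtain ⟨w, hw, hwf⟩ := exists_fresh hC.1 hV
  exact hC.hasPath_or_hasPath hk hm hmn hw hwf

theorem hasPath_or_hasCycle_of_hasCycle [Fintype V] (hk : 3 ≤ k) (hm : 2 ≤ m) (hmn : m ≤ n)
    (hV : n * (k - 1) + (m + 1) / 2 ≤ Fintype.card V) (h : hasCycle k n col b) :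
    hasPath k n col b ∨ hasCycle k m col (!b) := by
  obtain ⟨f, hC⟩ : ∃ f, IsCycleCopy k n col b f := h
  obtain ⟨w, hw, hwf⟩ := exists_fresh hC.1 hV
  exact hC.hasPath_or_hasCycle hk hm hmn hw hwf

theorem hasCycle_or_hasCycle_of_ramseyCC_le {N : ℕ} (hR : 0 < ramseyCC k n m)
    (hN : ramseyCC k n m ≤ N) (col : Finset (Fin N) → Bool) :
    hasCycle k n col true ∨ hasCycle k m col false := by
  have hR' : ∀ col : Finset (Fin (ramseyCC k n m)) → Bool,
      hasCycle k n col true ∨ hasCycle k m col false :=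
    Nat.sInf_mem (Nat.nonempty_of_pos_sInf hR)
  exact (hR' fun s => col (s.image (Fin.castLE hN))).imp
    (hasCycle_of_hasCycle_image (Fin.castLE_injective hN))
    (hasCycle_of_hasCycle_image (Fin.castLE_injective hN))

theorem ramseyPC_eq (hk : 3 ≤ k) (hm : 3 ≤ m) (hmn : m ≤ n)
    (hCC : ramseyCC k n m = (k - 1) * n + (m - 1) / 2) :
    ramseyPC k n m = (k - 1) * n + (m + 1) / 2 := by
  have hc : (k - 1) * n = n * (k - 1) := mul_comm _ _
  have : 0 < (k - 1) * n := Nat.mul_pos (by omega) (by omega)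
  have hV : n * (k - 1) + (m + 1) / 2 ≤ Fintype.card (Fin ((k - 1) * n + (m + 1) / 2)) := by
    rw [Fintype.card_fin]; omega
  refine IsLeast.csInf_eq ⟨fun col => ?_, fun x hx => ?_⟩
  · rcases hasCycle_or_hasCycle_of_ramseyCC_le (k := k) (n := n) (m := m) (by omega) (by omega)
      col with h | h
    exacts [hasPath_or_hasCycle_of_hasCycle hk (by omega) hmn hV h, .inr h]
  · by_contra! hx'
    rcases hx (coloringBelow (n * (k - 1)) x) with h | h
    exacts [not_hasPath_coloringBelow_true (by omega) (by omega) h,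
      not_hasCycle_coloringBelow_false (by omega) (by omega) (by omega) h]

theorem ramseyPP_eq (hk : 3 ≤ k) (hm : 3 ≤ m) (hmn : m ≤ n)
    (hCC : ∀ m', 3 ≤ m' → m' ≤ n → ramseyCC k n m' = (k - 1) * n + (m' - 1) / 2) :
    ramseyPP k n m = (k - 1) * n + (m + 1) / 2 := by
  have hc : (k - 1) * n = n * (k - 1) := mul_comm _ _
  have : 0 < (k - 1) * n := Nat.mul_pos (by omega) (by omega)
  have hV : n * (k - 1) + (m + 1) / 2 ≤ Fintype.card (Fin ((k - 1) * n + (m + 1) / 2)) := by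
    rw [Fintype.card_fin]; omega
  refine IsLeast.csInf_eq ⟨fun col => ?_, fun x hx => ?_⟩
  · rcases hmn.lt_or_eq with hlt | rfl
    · have := hCC (m + 1) (by omega) hlt
      rcases hasCycle_or_hasCycle_of_ramseyCC_le (k := k) (n := n) (m := m + 1) (by omega)
        (by omega) col with h | h
      exacts [hasPath_or_hasPath_of_hasCycle (by omega) (by omega) hmn hV h,
        .inr (hasPath_of_hasCycle_succ (by omega) h)]
    · have := hCC m hm le_rfl
      rcases hasCycle_or_hasCycle_of_ramseyCC_le (k := k) (n := m) (m := m) (by omega) (by omega)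
        col with h | h
      exacts [hasPath_or_hasPath_of_hasCycle (by omega) (by omega) hmn hV h,
        (hasPath_or_hasPath_of_hasCycle (by omega) (by omega) hmn hV h).symm]
  · by_contra! hx'
    rcases hx (coloringBelow (n * (k - 1)) x) with h | h
    exacts [not_hasPath_coloringBelow_true (by omega) (by omega) h,
      not_hasPath_coloringBelow_false (by omega) (by omega) (by omega) h]

end Ramsey

theorem conjectures_equivalent :
    (∀ k n m : ℕ, 3 ≤ k → 3 ≤ m → m ≤ n →
        ramseyPP k n m = (k - 1) * n + (m + 1) / 2 ∧
        ramseyPC k n m = (k - 1) * n + (m + 1) / 2 ∧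
        ramseyCC k n m + 1 = (k - 1) * n + (m + 1) / 2) ↔
    (∀ k n m : ℕ, 3 ≤ k → 3 ≤ m → m ≤ n →
        ramseyCC k n m = (k - 1) * n + (m - 1) / 2) := by
  constructor
  · intro h k n m hk hm hmn
    have := (h k n m hk hm hmn).2.2
    omega
  · intro h k n m hk hm hmn
    have hCC := h k n m hk hm hmn
    refine ⟨ramseyPP_eq hk hm hmn fun m' hm' hm'n => h k n m' hk hm' hm'n,
      ramseyPC_eq hk hm hmn hCC, ?_⟩
    omega
end

section
/- Let k ≥ 3 and t ≥ 5 be integers, and suppose all k-element subsets of a vertex set of size t(k−1)+1 are colored red or blue with no red copy of the k-uniform loose cycle C^k_t and no blue copy of C^k_3. Then there exist a red k-set e_1 and a blue k-set e_2 with |e_1 ∩ e_2| = k − 1, and a red k-set f_1 and a blue k-set f_2 with |f_1 ∩ f_2| = k − 1, such that (e_1 ∪ e_2) ∩ (f_1 ∪ f_2) = ∅. -/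
/-!
Suppose no two red–blue pairs have disjoint unions. The complement of a red–blue pair then
contains no red–blue pair, so by connectivity of the Johnson graph its `k`-sets all have one
colour; it is large enough to carry a blue `C^k_3`, so that colour is red. Hence any two blue
`k`-sets intersect, and in fact share two vertices: if `b₁ ∩ b₂ = {x}`, a loose `C^k_t` avoiding
`x` can be laid out so that each edge misses `b₁` or `b₂`, and is therefore red. But then no
red–blue pair exists at all: a loose `C^k_t` whose first edge is the red set, and whose other edges
each meet the blue set in at most one vertex, would be red. So all `k`-sets have one colour, again
red, and they contain a red `C^k_t`.
-/

open Finset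

theorem exists_injOn_mapsTo_of_card_le {α β : Type*} [Nonempty β] {s : Finset α}
    {t : Finset β} (h : #s ≤ #t) : ∃ f : α → β, Set.InjOn f s ∧ Set.MapsTo f s t := by
  obtain ⟨f, hst, hf⟩ := s.finite_toSet.exists_injOn_of_encard_le
    (t := (t : Set β)) (by simpa only [Set.encard_coe_eq_coe_finsetCard] using Nat.cast_le.2 h)
  exact ⟨f, hf, hst⟩

theorem exists_injOn_union_eqOn {α β : Type*} {s₁ s₂ : Set α} {t₁ t₂ : Set β}
    (hs : Disjoint s₁ s₂) (ht : Disjoint t₁ t₂) {f₁ f₂ : α → β} (hf₁ : Set.InjOn f₁ s₁)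
    (hm₁ : Set.MapsTo f₁ s₁ t₁) (hf₂ : Set.InjOn f₂ s₂) (hm₂ : Set.MapsTo f₂ s₂ t₂) :
    ∃ f : α → β, Set.InjOn f (s₁ ∪ s₂) ∧ Set.EqOn f f₁ s₁ ∧ Set.EqOn f f₂ s₂ := by
  classical
  have h₁ : Set.EqOn (s₁.piecewise f₁ f₂) f₁ s₁ := Set.piecewise_eqOn _ _ _
  have h₂ : Set.EqOn (s₁.piecewise f₁ f₂) f₂ s₂ :=
    (Set.piecewise_eqOn_compl _ _ _).mono fun x hx hx₁ => hs.le_bot ⟨hx₁, hx⟩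
  refine ⟨s₁.piecewise f₁ f₂, (Set.injOn_union hs).2 ⟨hf₁.congr h₁.symm, hf₂.congr h₂.symm, ?_⟩,
    h₁, h₂⟩
  intro x hx y hy hxy
  rw [h₁ hx, h₂ hy] at hxy
  exact ht.le_bot ⟨hm₁ hx, hxy ▸ hm₂ hy⟩

theorem exists_injOn_mapsTo_of_card_le₃ {α β : Type*} [DecidableEq α] [DecidableEq β]
    [Nonempty β] {P Q R : Finset α} {A B C : Finset β} (hPQ : Disjoint P Q) (hPQR : Disjoint (P ∪ Q) R)
    (hAB : Disjoint A B) (hABC : Disjoint (A ∪ B) C) (hP : #P ≤ #A) (hQ : #Q ≤ #B)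
    (hR : #R ≤ #C) :
    ∃ f : α → β, Set.InjOn f ↑(P ∪ Q ∪ R) ∧ Set.MapsTo f P A ∧ Set.MapsTo f Q B ∧
      Set.MapsTo f R C := by
  obtain ⟨f₁, hf₁, hm₁⟩ := exists_injOn_mapsTo_of_card_le hP
  obtain ⟨f₂, hf₂, hm₂⟩ := exists_injOn_mapsTo_of_card_le hQ
  obtain ⟨f₃, hf₃, hm₃⟩ := exists_injOn_mapsTo_of_card_le hR
  obtain ⟨g, hg, hgP, hgQ⟩ := exists_injOn_union_eqOn (disjoint_coe.2 hPQ)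
    (disjoint_coe.2 hAB) hf₁ hm₁ hf₂ hm₂
  have hmg : Set.MapsTo g ↑(P ∪ Q) ↑(A ∪ B) := by
    rw [coe_union, coe_union]
    exact (hm₁.congr hgP.symm).union_union (hm₂.congr hgQ.symm)
  obtain ⟨f, hf, hfg, hf₃⟩ := exists_injOn_union_eqOn (disjoint_coe.2 hPQR)
    (disjoint_coe.2 hABC) (by rwa [coe_union]) hmg hf₃ hm₃
  refine ⟨f, by rwa [coe_union], ?_, ?_, hm₃.congr hf₃.symm⟩
  · exact hm₁.congr fun x hx => ((hfg (by simp [mem_coe.1 hx])).trans (hgP hx)).symm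
  · exact hm₂.congr fun x hx => ((hfg (by simp [mem_coe.1 hx])).trans (hgQ hx)).symm

section LooseCycle

variable {V : Type} [DecidableEq V] {k n i : ℕ}

def cycleEdgePos (k n i : ℕ) : Finset ℕ :=
  (range k).image fun j => (i * (k - 1) + j) % (n * (k - 1))

theorem cycleEdge_eq_image (f : ℕ → V) : cycleEdge k n f i = (cycleEdgePos k n i).image f := by
  rw [cycleEdgePos, image_image]
  rfl

theorem lt_of_mem_cycleEdgePos (hM : 0 < n * (k - 1)) {r : ℕ} (hr : r ∈ cycleEdgePos k n i) :
    r < n * (k - 1) := by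
  obtain ⟨j, -, rfl⟩ := mem_image.1 hr
  exact Nat.mod_lt _ hM

theorem card_cycleEdgePos (hk : k ≤ n * (k - 1)) : #(cycleEdgePos k n i) = k := by
  rw [cycleEdgePos, card_image_of_injOn, card_range]
  intro j₁ hj₁ j₂ hj₂ h
  simp only [coe_range, Set.mem_Iio] at hj₁ hj₂
  have h' := Nat.ModEq.add_left_cancel' _ h
  rwa [Nat.ModEq, Nat.mod_eq_of_lt (by omega), Nat.mod_eq_of_lt (by omega)] at h'

theorem card_cycleEdge (hk₀ : 0 < k) (hk : k ≤ n * (k - 1)) {f : ℕ → V}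
    (hf : Set.InjOn f (Set.Iio (n * (k - 1)))) : #(cycleEdge k n f i) = k := by
  rw [cycleEdge_eq_image, card_image_of_injOn, card_cycleEdgePos hk]
  exact hf.mono fun r hr => lt_of_mem_cycleEdgePos (by omega) hr

theorem mem_cycleEdgePos (hk : 2 ≤ k) (hi : i < n) {r : ℕ} :
    r ∈ cycleEdgePos k n i ↔
      (i * (k - 1) ≤ r ∧ r ≤ i * (k - 1) + (k - 1) ∧ r < n * (k - 1)) ∨ (i + 1 = n ∧ r = 0) := by
  have hin : i * (k - 1) + (k - 1) ≤ n * (k - 1) := by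
    simpa only [Nat.succ_mul] using Nat.mul_le_mul_right (k - 1) hi
  have hwrap : (i * (k - 1) + (k - 1)) % (n * (k - 1)) = (i + 1) % n * (k - 1) := by
    rw [← Nat.succ_mul, Nat.mul_mod_mul_right]
  simp only [cycleEdgePos, mem_image, mem_range]
  constructor
  · rintro ⟨j, hj, rfl⟩
    rcases Nat.lt_or_ge (i * (k - 1) + j) (n * (k - 1)) with hlt | hge
    · left
      rw [Nat.mod_eq_of_lt hlt]
      omega
    · obtain rfl : j = k - 1 := by omega
      have hn : i + 1 = n :=
        Nat.eq_of_mul_eq_mul_right (by omega : 0 < k - 1) (by rw [Nat.succ_mul]; omega)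
      refine Or.inr ⟨hn, ?_⟩
      rw [hwrap, hn, Nat.mod_self, zero_mul]
  · rintro (⟨h₁, h₂, h₃⟩ | ⟨rfl, rfl⟩)
    · exact ⟨r - i * (k - 1), by omega, by rw [Nat.add_sub_cancel' h₁, Nat.mod_eq_of_lt h₃]⟩
    · exact ⟨k - 1, by omega, by rw [hwrap, Nat.mod_self, zero_mul]⟩

theorem card_cycleEdge_inter_le_one {f : ℕ → V} {S : Finset V}
    (h : ∀ r₁ ∈ cycleEdgePos k n i, ∀ r₂ ∈ cycleEdgePos k n i, f r₁ ∈ S → f r₂ ∈ S → r₁ = r₂) :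
    #(cycleEdge k n f i ∩ S) ≤ 1 := by
  rw [card_le_one]
  intro a ha b hb
  simp only [mem_inter, cycleEdge_eq_image, mem_image] at ha hb
  obtain ⟨⟨r₁, hr₁, rfl⟩, h₁⟩ := ha
  obtain ⟨⟨r₂, hr₂, rfl⟩, h₂⟩ := hb
  rw [h r₁ hr₁ r₂ hr₂ h₁ h₂]

theorem disjoint_cycleEdge {f : ℕ → V} {S : Finset V} (h : ∀ r ∈ cycleEdgePos k n i, f r ∉ S) :
    Disjoint (cycleEdge k n f i) S := by
  rw [cycleEdge_eq_image, disjoint_left]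
  rintro _ hv
  obtain ⟨r, hr, rfl⟩ := mem_image.1 hv
  exact h r hr

theorem hasCycle_of_forall_subset (hk : 2 ≤ k) (hn : 2 ≤ n) {col : Finset V → Bool} {b : Bool}
    {U : Finset V} (hU : n * (k - 1) ≤ #U) (hmono : ∀ e ⊆ U, #e = k → col e = b) :
    hasCycle k n col b := by
  have hkn : k ≤ n * (k - 1) := by
    have := Nat.mul_le_mul_right (k - 1) hn
    omega
  obtain ⟨v, -⟩ := card_pos.1 (by omega : 0 < #U)
  have : Nonempty V := ⟨v⟩
  obtain ⟨f, hf, hfU⟩ := exists_injOn_mapsTo_of_card_le (s := range (n * (k - 1)))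
    (by simpa using hU)
  rw [coe_range] at hf hfU
  refine ⟨f, hf, fun i _ => hmono _ ?_ (card_cycleEdge (by omega) hkn hf)⟩
  rw [cycleEdge_eq_image]
  exact image_subset_iff.2 fun r hr => hfU (lt_of_mem_cycleEdgePos (by omega) hr)

end LooseCycle

section Johnson

variable {V : Type} [DecidableEq V] {k : ℕ}

theorem apply_eq_of_card_inter_eq_sub_one {β : Type*} (g : Finset V → β) {U : Finset V}
    (hadj : ∀ e₁ ⊆ U, ∀ e₂ ⊆ U, #e₁ = k → #e₂ = k → #(e₁ ∩ e₂) = k - 1 → g e₁ = g e₂)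
    {e₁ e₂ : Finset V} (he₁U : e₁ ⊆ U) (he₂U : e₂ ⊆ U) (he₁ : #e₁ = k) (he₂ : #e₂ = k) :
    g e₁ = g e₂ := by
  induction hd : #(e₁ \ e₂) generalizing e₁ with
  | zero =>
    rw [card_eq_zero, sdiff_eq_empty_iff_subset] at hd
    rw [eq_of_subset_of_card_le hd (by omega)]
  | succ d ih =>
    obtain ⟨x, hx⟩ : (e₁ \ e₂).Nonempty := by rw [← card_pos]; omega
    obtain ⟨y, hy⟩ : (e₂ \ e₁).Nonempty := by rw [← card_pos, ← card_sdiff_comm (by omega)]; omega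
    rw [mem_sdiff] at hx hy
    have hpos := card_pos.2 ⟨x, hx.1⟩
    have he'U : insert y (e₁.erase x) ⊆ U :=
      insert_subset (he₂U hy.1) ((erase_subset x e₁).trans he₁U)
    have he' : #(insert y (e₁.erase x)) = k := by
      rw [card_insert_of_notMem fun h => hy.2 (mem_of_mem_erase h), card_erase_of_mem hx.1]
      omega
    have hinter : #(e₁ ∩ insert y (e₁.erase x)) = k - 1 := by
      rw [inter_insert_of_notMem hy.2, inter_eq_right.2 (erase_subset x e₁),
        card_erase_of_mem hx.1, he₁]
    rw [hadj e₁ he₁U _ he'U he₁ he' hinter]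
    refine ih he'U he' ?_
    rw [insert_sdiff_of_mem _ hy.1, erase_sdiff_comm, card_erase_of_mem (mem_sdiff.2 hx), hd]
    rfl

def IsRedBluePair (col : Finset V → Bool) (k : ℕ) (e₁ e₂ : Finset V) : Prop :=
  #e₁ = k ∧ #e₂ = k ∧ col e₁ = true ∧ col e₂ = false ∧ #(e₁ ∩ e₂) = k - 1

theorem IsRedBluePair.card_union (hk : 1 ≤ k) {col : Finset V → Bool} {e₁ e₂ : Finset V}
    (h : IsRedBluePair col k e₁ e₂) : #(e₁ ∪ e₂) = k + 1 := by
  have := card_union_add_card_inter e₁ e₂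
  obtain ⟨h₁, h₂, -, -, h₁₂⟩ := h
  omega

theorem col_eq_of_forall_not_isRedBluePair {col : Finset V → Bool} {U : Finset V}
    (h : ∀ e₁ ⊆ U, ∀ e₂ ⊆ U, ¬IsRedBluePair col k e₁ e₂) {e₁ e₂ : Finset V} (he₁U : e₁ ⊆ U)
    (he₂U : e₂ ⊆ U) (he₁ : #e₁ = k) (he₂ : #e₂ = k) : col e₁ = col e₂ := by
  refine apply_eq_of_card_inter_eq_sub_one col ?_ he₁U he₂U he₁ he₂
  intro a haU b hbU ha hb hab
  cases hca : col a <;> cases hcb : col b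
  · rfl
  · exact absurd ⟨hb, ha, hcb, hca, by rwa [inter_comm]⟩ (h b hbU a haU)
  · exact absurd ⟨ha, hb, hca, hcb, hab⟩ (h a haU b hbU)
  · rfl

end Johnson

section Coloring

variable {V : Type} [DecidableEq V] {col : Finset V → Bool} {k t : ℕ}

theorem col_eq_true_of_forall_not_isRedBluePair (hk : 2 ≤ k) (hnoblue : ¬hasCycle k 3 col false)
    {U : Finset V} (hU : 3 * (k - 1) ≤ #U) (h : ∀ e₁ ⊆ U, ∀ e₂ ⊆ U, ¬IsRedBluePair col k e₁ e₂)
    {e : Finset V} (heU : e ⊆ U) (he : #e = k) : col e = true := by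
  by_contra hred
  rw [Bool.not_eq_true] at hred
  exact hnoblue (hasCycle_of_forall_subset hk (by norm_num) hU fun e' he'U he' =>
    (col_eq_of_forall_not_isRedBluePair h he'U heU he' he).trans hred)

variable [Fintype V]

theorem col_eq_true_of_disjoint_isRedBluePair (hk : 2 ≤ k)
    (hV : 3 * (k - 1) + (k + 1) ≤ Fintype.card V) (hnoblue : ¬hasCycle k 3 col false)
    (hmeet : ∀ e₁ e₂ f₁ f₂, IsRedBluePair col k e₁ e₂ → IsRedBluePair col k f₁ f₂ →
      ¬Disjoint (e₁ ∪ e₂) (f₁ ∪ f₂))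
    {e₁ e₂ : Finset V} (hp : IsRedBluePair col k e₁ e₂) {e : Finset V} (he : #e = k)
    (hdisj : Disjoint e (e₁ ∪ e₂)) : col e = true := by
  refine col_eq_true_of_forall_not_isRedBluePair hk hnoblue (U := (e₁ ∪ e₂)ᶜ) ?_ ?_
    (subset_compl_iff_disjoint_right.2 hdisj) he
  · rw [card_compl, hp.card_union (by omega)]
    omega
  · intro f₁ hf₁ f₂ hf₂ hq
    exact hmeet _ _ _ _ hp hq (subset_compl_iff_disjoint_left.1 (union_subset hf₁ hf₂))

theorem not_disjoint_of_col_eq_false (hk : 2 ≤ k)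
    (hV : 3 * (k - 1) + (k + 1) ≤ Fintype.card V) (hnoblue : ¬hasCycle k 3 col false)
    (hmeet : ∀ e₁ e₂ f₁ f₂, IsRedBluePair col k e₁ e₂ → IsRedBluePair col k f₁ f₂ →
      ¬Disjoint (e₁ ∪ e₂) (f₁ ∪ f₂))
    {b₁ b₂ : Finset V} (hb₁ : #b₁ = k) (hb₂ : #b₂ = k) (hc₁ : col b₁ = false)
    (hc₂ : col b₂ = false) : ¬Disjoint b₁ b₂ := by
  intro hdisj
  have hnopair : ∀ e₁ ⊆ b₂ᶜ, ∀ e₂ ⊆ b₂ᶜ, ¬IsRedBluePair col k e₁ e₂ := fun e₁ he₁ e₂ he₂ hp => by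
    simpa [hc₂] using col_eq_true_of_disjoint_isRedBluePair hk hV hnoblue hmeet hp hb₂
      (subset_compl_iff_disjoint_left.1 (union_subset he₁ he₂))
  simpa [hc₁] using col_eq_true_of_forall_not_isRedBluePair hk hnoblue
    (by rw [card_compl]; omega) hnopair (subset_compl_iff_disjoint_right.2 hdisj) hb₁

theorem exists_enumeration_of_card_inter_eq_one (hk : 2 ≤ k) (ht : 3 ≤ t)
    (hV : t * (k - 1) + 1 ≤ Fintype.card V) {b₁ b₂ : Finset V} (hb₁ : #b₁ = k) (hb₂ : #b₂ = k)
    (h₁₂ : #(b₁ ∩ b₂) = 1) :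
    ∃ f : ℕ → V, Set.InjOn f (Set.Iio (t * (k - 1))) ∧ ∀ r < t * (k - 1),
      (f r ∈ b₁ → r < k - 1) ∧ (f r ∈ b₂ → 2 * (k - 1) ≤ r ∧ r < 3 * (k - 1)) := by
  have : Nonempty V := Fintype.card_pos_iff.1 (by omega)
  have hM : 3 * (k - 1) ≤ t * (k - 1) := Nat.mul_le_mul_right _ ht
  have hPQ : Disjoint (range (k - 1)) (Ico (2 * (k - 1)) (3 * (k - 1))) := by
    rw [disjoint_left]
    intro r
    simp only [mem_range, mem_Ico]
    omega
  have hPQM : range (k - 1) ∪ Ico (2 * (k - 1)) (3 * (k - 1)) ⊆ range (t * (k - 1)) := by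
    intro r
    simp only [mem_union, mem_range, mem_Ico]
    omega
  have hunion := card_union_add_card_inter b₁ b₂
  obtain ⟨f, hf, hP, hQ, hR⟩ := exists_injOn_mapsTo_of_card_le₃ (A := b₁ \ b₂) (B := b₂ \ b₁)
    (C := (b₁ ∪ b₂)ᶜ) hPQ disjoint_sdiff (sdiff_disjoint.mono_right sdiff_subset)
    (disjoint_compl_right.mono_left (union_subset_union sdiff_subset sdiff_subset))
    (by rw [card_sdiff, inter_comm, card_range]; omega)
    (by rw [card_sdiff, Nat.card_Ico]; omega)
    (by rw [card_sdiff_of_subset hPQM, card_union_of_disjoint hPQ, card_compl, card_range,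
      card_range, Nat.card_Ico]; omega)
  rw [union_sdiff_of_subset hPQM, coe_range] at hf
  refine ⟨f, hf, fun r hr => ?_⟩
  have hP' := @hP r
  have hQ' := @hQ r
  have hR' := @hR r
  simp only [coe_range, coe_Ico, coe_sdiff, coe_union, coe_compl, Set.mem_Iio, Set.mem_Ico,
    Set.mem_sdiff, Set.mem_union, Set.mem_compl_iff, mem_coe] at hP' hQ' hR'
  grind

/-- The common vertex of `b₁` and `b₂` is left out of the cycle, so each edge misses `b₁` or
`b₂`. -/
theorem hasCycle_true_of_card_inter_eq_one (hk : 2 ≤ k) (ht : 4 ≤ t)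
    (hV : t * (k - 1) + 1 ≤ Fintype.card V)
    (hblue : ∀ b₁ b₂ : Finset V, #b₁ = k → #b₂ = k → col b₁ = false → col b₂ = false →
      ¬Disjoint b₁ b₂)
    {b₁ b₂ : Finset V} (hb₁ : #b₁ = k) (hb₂ : #b₂ = k) (hc₁ : col b₁ = false)
    (hc₂ : col b₂ = false) (h₁₂ : #(b₁ ∩ b₂) = 1) : hasCycle k t col true := by
  obtain ⟨f, hf, hloc⟩ := exists_enumeration_of_card_inter_eq_one hk (by omega) hV hb₁ hb₂ h₁₂
  have hM : 3 * (k - 1) ≤ t * (k - 1) := Nat.mul_le_mul_right _ (by omega)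
  refine ⟨f, hf, fun i hi => ?_⟩
  have hsep : (∀ r ∈ cycleEdgePos k t i, f r ∉ b₁) ∨ ∀ r ∈ cycleEdgePos k t i, f r ∉ b₂ := by
    by_contra! h
    obtain ⟨⟨r₁, hr₁, h₁⟩, r₂, hr₂, h₂⟩ := h
    have h₁' := (hloc r₁ (lt_of_mem_cycleEdgePos (by omega) hr₁)).1 h₁
    have h₂' := (hloc r₂ (lt_of_mem_cycleEdgePos (by omega) hr₂)).2 h₂
    rw [mem_cycleEdgePos hk hi] at hr₁ hr₂
    rcases Nat.lt_or_ge i 3 with hi3 | hi3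
    · interval_cases i <;> omega
    · have := Nat.mul_le_mul_right (k - 1) hi3
      omega
  have hedge := card_cycleEdge (i := i) (by omega) (by omega) hf
  cases hc : col (cycleEdge k t f i)
  · rcases hsep with h | h
    · exact absurd (disjoint_cycleEdge h).symm (hblue _ _ hb₁ hedge hc₁ hc)
    · exact absurd (disjoint_cycleEdge h).symm (hblue _ _ hb₂ hedge hc₂ hc)
  · rfl

theorem two_le_card_inter_of_col_eq_false (hk : 2 ≤ k) (ht : 5 ≤ t)
    (hV : t * (k - 1) + 1 ≤ Fintype.card V) (hnored : ¬hasCycle k t col true)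
    (hnoblue : ¬hasCycle k 3 col false)
    (hmeet : ∀ e₁ e₂ f₁ f₂, IsRedBluePair col k e₁ e₂ → IsRedBluePair col k f₁ f₂ →
      ¬Disjoint (e₁ ∪ e₂) (f₁ ∪ f₂))
    {b₁ b₂ : Finset V} (hb₁ : #b₁ = k) (hb₂ : #b₂ = k) (hc₁ : col b₁ = false)
    (hc₂ : col b₂ = false) : 2 ≤ #(b₁ ∩ b₂) := by
  have hV' : 3 * (k - 1) + (k + 1) ≤ Fintype.card V := by
    have := Nat.mul_le_mul_right (k - 1) ht
    omega
  have hblue : ∀ b₁ b₂ : Finset V, #b₁ = k → #b₂ = k → col b₁ = false → col b₂ = false →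
      ¬Disjoint b₁ b₂ := fun _ _ => not_disjoint_of_col_eq_false hk hV' hnoblue hmeet
  have hpos : 0 < #(b₁ ∩ b₂) := card_pos.2 (not_disjoint_iff_nonempty_inter.1
    (hblue b₁ b₂ hb₁ hb₂ hc₁ hc₂))
  by_contra h
  exact hnored (hasCycle_true_of_card_inter_eq_one hk (by omega) hV hblue hb₁ hb₂ hc₁ hc₂
    (by omega))

theorem exists_enumeration_of_card_inter_eq_sub_one (hk : 2 ≤ k) (ht : 4 ≤ t)
    (hV : t * (k - 1) ≤ Fintype.card V) {e₁ e₂ : Finset V} (h₁ : #e₁ = k) (h₂ : #e₂ = k)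
    (h₁₂ : #(e₁ ∩ e₂) = k - 1) :
    ∃ f : ℕ → V, Set.InjOn f (Set.Iio (t * (k - 1))) ∧ ∀ r < t * (k - 1),
      (r < k → f r ∈ e₁) ∧ (f r ∈ e₂ → r < k ∨ r = 2 * k - 1) := by
  have hM : 4 * (k - 1) ≤ t * (k - 1) := Nat.mul_le_mul_right _ ht
  have : Nonempty V := Fintype.card_pos_iff.1 (by omega)
  have hPQ : Disjoint (range k) {2 * k - 1} := by
    rw [disjoint_singleton_right, mem_range]
    omega
  have hPQM : range k ∪ {2 * k - 1} ⊆ range (t * (k - 1)) := by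
    intro r
    simp only [mem_union, mem_range, mem_singleton]
    omega
  have hunion := card_union_add_card_inter e₁ e₂
  obtain ⟨f, hf, hP, hQ, hR⟩ := exists_injOn_mapsTo_of_card_le₃ (A := e₁) (B := e₂ \ e₁)
    (C := (e₁ ∪ e₂)ᶜ) hPQ disjoint_sdiff disjoint_sdiff
    (disjoint_compl_right.mono_left (union_subset_union subset_rfl sdiff_subset))
    (by rw [card_range, h₁])
    (by rw [card_sdiff, card_singleton]; omega)
    (by rw [card_sdiff_of_subset hPQM, card_union_of_disjoint hPQ, card_compl, card_range,
      card_range, card_singleton]; omega)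
  rw [union_sdiff_of_subset hPQM, coe_range] at hf
  refine ⟨f, hf, fun r hr => ?_⟩
  have hP' := @hP r
  have hQ' := @hQ r
  have hR' := @hR r
  simp only [coe_range, coe_singleton, coe_sdiff, coe_union, coe_compl, Set.mem_Iio,
    Set.mem_singleton_iff, Set.mem_sdiff, Set.mem_union, Set.mem_compl_iff, mem_coe] at hP' hQ' hR'
  grind

/-- The first edge of the cycle is the red `e₁`; every other edge meets the blue `e₂` in at most
one vertex. -/
theorem not_isRedBluePair (hk : 3 ≤ k) (ht : 4 ≤ t) (hV : t * (k - 1) ≤ Fintype.card V)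
    (hnored : ¬hasCycle k t col true)
    (hblue : ∀ b₁ b₂ : Finset V, #b₁ = k → #b₂ = k → col b₁ = false → col b₂ = false →
      2 ≤ #(b₁ ∩ b₂))
    (e₁ e₂ : Finset V) : ¬IsRedBluePair col k e₁ e₂ := by
  rintro ⟨h₁, h₂, hc₁, hc₂, h₁₂⟩
  obtain ⟨f, hf, hloc⟩ := exists_enumeration_of_card_inter_eq_sub_one (by omega) ht hV h₁ h₂ h₁₂
  have hM : 4 * (k - 1) ≤ t * (k - 1) := Nat.mul_le_mul_right _ ht
  have hkM : k ≤ t * (k - 1) := by omega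
  have hedge₀ : cycleEdge k t f 0 = e₁ := by
    refine eq_of_subset_of_card_le ?_ (by rw [h₁, card_cycleEdge (by omega) hkM hf])
    rw [cycleEdge_eq_image]
    refine image_subset_iff.2 fun r hr => (hloc r (lt_of_mem_cycleEdgePos (by omega) hr)).1 ?_
    rw [mem_cycleEdgePos (by omega) (by omega)] at hr
    omega
  refine hnored ⟨f, hf, fun i hi => ?_⟩
  rcases eq_or_ne i 0 with rfl | hi0
  · rwa [hedge₀]
  by_contra hb
  rw [Bool.not_eq_true] at hb
  have h2 := hblue _ _ (card_cycleEdge (by omega) hkM hf) h₂ hb hc₂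
  have h1 : #(cycleEdge k t f i ∩ e₂) ≤ 1 := by
    refine card_cycleEdge_inter_le_one fun r₁ hr₁ r₂ hr₂ hm₁ hm₂ => ?_
    have h₁' := (hloc r₁ (lt_of_mem_cycleEdgePos (by omega) hr₁)).2 hm₁
    have h₂' := (hloc r₂ (lt_of_mem_cycleEdgePos (by omega) hr₂)).2 hm₂
    rw [mem_cycleEdgePos (by omega) hi] at hr₁ hr₂
    rcases Nat.lt_or_ge i 3 with hi3 | hi3
    · interval_cases i <;> omega
    · have := Nat.mul_le_mul_right (k - 1) hi3
      omega
  omega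

end Coloring

theorem two_disjoint_intersecting_red_blue_pairs (k t : ℕ) (hk : 3 ≤ k) (ht : 5 ≤ t)
    (col : Finset (Fin (t * (k - 1) + 1)) → Bool)
    (hnored : ¬ hasCycle k t col true)
    (hnoblue : ¬ hasCycle k 3 col false) :
    ∃ e₁ e₂ f₁ f₂ : Finset (Fin (t * (k - 1) + 1)),
      e₁.card = k ∧ e₂.card = k ∧ f₁.card = k ∧ f₂.card = k ∧
      col e₁ = true ∧ col e₂ = false ∧ col f₁ = true ∧ col f₂ = false ∧
      (e₁ ∩ e₂).card = k - 1 ∧ (f₁ ∩ f₂).card = k - 1 ∧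
      (e₁ ∪ e₂) ∩ (f₁ ∪ f₂) = ∅ := by
  by_contra hne
  have hmeet : ∀ e₁ e₂ f₁ f₂, IsRedBluePair col k e₁ e₂ → IsRedBluePair col k f₁ f₂ →
      ¬Disjoint (e₁ ∪ e₂) (f₁ ∪ f₂) := by
    rintro e₁ e₂ f₁ f₂ ⟨he₁, he₂, hre, hbe, he⟩ ⟨hf₁, hf₂, hrf, hbf, hf⟩ hdisj
    exact hne ⟨e₁, e₂, f₁, f₂, he₁, he₂, hf₁, hf₂, hre, hbe, hrf, hbf, he, hf,
      disjoint_iff_inter_eq_empty.1 hdisj⟩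
  have hV : t * (k - 1) + 1 ≤ Fintype.card (Fin (t * (k - 1) + 1)) := (Fintype.card_fin _).ge
  have hM : 3 * (k - 1) ≤ t * (k - 1) := Nat.mul_le_mul_right _ (by omega)
  have hnopair : ∀ e₁ e₂, ¬IsRedBluePair col k e₁ e₂ :=
    not_isRedBluePair hk (by omega) (by omega) hnored fun _ _ =>
      two_le_card_inter_of_col_eq_false (by omega) ht hV hnored hnoblue hmeet
  have hred : ∀ e ⊆ univ, #e = k → col e = true := fun e he₁ he =>
    col_eq_true_of_forall_not_isRedBluePair (by omega) hnoblue
      (by rw [card_univ, Fintype.card_fin]; omega) (fun e₁ _ e₂ _ => hnopair e₁ e₂) he₁ he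
  exact hnored (hasCycle_of_forall_subset (by omega) (by omega) (by simp) hred)
end
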